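/- arXiv:2605.11721 — 8 statements merged into one kernel-verified Lean document; each statement's English description precedes it below -/
import Mathlib

section
/- Let G_ν : V × V → ℝ be a symmetric positive semidefinite bilinear form on a real vector space V, let w_g, g_1, …, g_K ∈ V', let S_g > 0, and suppose r : ℝ → ℝ, V_ν : ℝ → V, λ_i : ℝ → ℝ are differentiable with r(t) ≠ 0, satisfying (i) G_ν(V_ν(t), φ) = -(r(t)/S_g)·⟨w_g, φ⟩ - Σ_i λ_i(t)·⟨g_i, φ⟩ for all φ ∈ V, and (ii) r'(t) = (1/(2 S_g))·⟨w_g, V_ν(t)⟩ + Σ_i (λ_i(t)/(2 r(t)))·⟨g_i, V_ν(t)⟩. Then d/dt (r(t)²) = -G_ν(V_ν(t), V_ν(t)) ≤ 0. -/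
open Finset

lemma two_mul_mul_sav_rate {ι : Type*} (I : Finset ι) {ρ S : ℝ} (hρ : ρ ≠ 0) (hS : S ≠ 0)
    (a : ℝ) (c b : ι → ℝ) :
    2 * ρ * ((1 / (2 * S)) * a + ∑ i ∈ I, (c i / (2 * ρ)) * b i) =
      ρ / S * a + ∑ i ∈ I, c i * b i := by
  rw [mul_add, mul_sum]
  congr 1
  · field_simp
  · exact sum_congr rfl fun i _ => by field_simp

/-- The factor `1 / (2 r)` in the auxiliary ODE is exactly what `d/dt r² = 2 r r'` cancels. -/
lemma hasDerivAt_sq_of_sav_ode {ι : Type*} (I : Finset ι) {r : ℝ → ℝ} {t S a : ℝ}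
    {c b : ι → ℝ} (hrt : r t ≠ 0) (hS : S ≠ 0)
    (hODE : HasDerivAt r ((1 / (2 * S)) * a + ∑ i ∈ I, (c i / (2 * r t)) * b i) t) :
    HasDerivAt (fun s => r s ^ 2) (r t / S * a + ∑ i ∈ I, c i * b i) t := by
  refine (hODE.fun_pow 2).congr_deriv ?_
  rw [← two_mul_mul_sav_rate I hrt hS]
  norm_num

theorem continuous_geometric_sav_dissipation_general
    {V : Type*} [AddCommGroup V] [Module ℝ V]
    (Gν : V → V → ℝ)
    (hGpsd : ∀ v, 0 ≤ Gν v v)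
    {K : ℕ} (wg : V →ₗ[ℝ] ℝ) (g : Fin K → V →ₗ[ℝ] ℝ)
    (Sg : ℝ) (hSg : 0 < Sg)
    (r : ℝ → ℝ) (Vν : ℝ → V) (lam : Fin K → ℝ → ℝ)
    (hr : ∀ t, r t ≠ 0)
    (hweak : ∀ t φ, Gν (Vν t) φ =
      -(r t / Sg) * wg φ - ∑ i, lam i t * g i φ)
    (hODE : ∀ t, HasDerivAt r
      ((1 / (2 * Sg)) * wg (Vν t)
        + ∑ i, (lam i t / (2 * r t)) * g i (Vν t)) t) :
    ∀ t, HasDerivAt (fun s => (r s) ^ 2) (-(Gν (Vν t) (Vν t))) t ∧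
      -(Gν (Vν t) (Vν t)) ≤ 0 := by
  intro t
  refine ⟨?_, neg_nonpos.mpr (hGpsd (Vν t))⟩
  convert hasDerivAt_sq_of_sav_ode univ (hr t) hSg.ne' (hODE t) using 1
  rw [hweak t (Vν t)]
  ring

/-- Continuous geometric SAV dissipation: under the dual-SAV normal velocity
equation and the constraint-consistent auxiliary ODE, the modified geometric
SAV energy `r²` satisfies `d/dt r² = -G_ν(V_ν, V_ν) ≤ 0`. -/
theorem continuous_geometric_sav_dissipation
    {V : Type*} [AddCommGroup V] [Module ℝ V]
    (Gν : V → V → ℝ)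
    (hGsymm : ∀ u v, Gν u v = Gν v u)
    (hGpsd : ∀ v, 0 ≤ Gν v v)
    {K : ℕ} (wg : V →ₗ[ℝ] ℝ) (g : Fin K → V →ₗ[ℝ] ℝ)
    (Sg : ℝ) (hSg : 0 < Sg)
    (r : ℝ → ℝ) (Vν : ℝ → V) (lam : Fin K → ℝ → ℝ)
    (hr : ∀ t, r t ≠ 0)
    (hweak : ∀ t φ, Gν (Vν t) φ =
      -(r t / Sg) * wg φ - ∑ i, lam i t * g i φ)
    (hODE : ∀ t, HasDerivAt r
      ((1 / (2 * Sg)) * wg (Vν t)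
        + ∑ i, (lam i t / (2 * r t)) * g i (Vν t)) t) :
    ∀ t, HasDerivAt (fun s => (r s) ^ 2) (-(Gν (Vν t) (Vν t))) t ∧
      -(Gν (Vν t) (Vν t)) ≤ 0 :=
  continuous_geometric_sav_dissipation_general Gν hGpsd wg g Sg hSg r Vν lam hr hweak hODE
end

section
/- Let G_τ : V × V → ℝ be a symmetric positive semidefinite bilinear form on a real vector space V, let w_m ∈ V', let S_m > 0, and suppose r_m : ℝ → ℝ and V_τ : ℝ → V are differentiable, satisfying (i) G_τ(V_τ(t), φ) = -(r_m(t)/S_m)·⟨w_m, φ⟩ for all φ ∈ V, and (ii) r_m'(t) = (1/(2 S_m))·⟨w_m, V_τ(t)⟩. Then d/dt (r_m(t)²) = -G_τ(V_τ(t), V_τ(t)) ≤ 0. -/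
theorem continuous_mesh_sav_dissipation_general
    {V : Type*} [AddCommGroup V] [Module ℝ V]
    (Gτ : V → V → ℝ)
    (hGpsd : ∀ v, 0 ≤ Gτ v v)
    (wm : V →ₗ[ℝ] ℝ) (Sm : ℝ)
    (rm : ℝ → ℝ) (Vτ : ℝ → V)
    (hweak : ∀ t φ, Gτ (Vτ t) φ = -(rm t / Sm) * wm φ)
    (hODE : ∀ t, HasDerivAt rm ((1 / (2 * Sm)) * wm (Vτ t)) t) :
    ∀ t, HasDerivAt (fun s => (rm s) ^ 2) (-(Gτ (Vτ t) (Vτ t))) t ∧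
      -(Gτ (Vτ t) (Vτ t)) ≤ 0 := by
  intro t
  refine ⟨?_, neg_nonpos_of_nonneg (hGpsd _)⟩
  -- Testing the weak equation with `φ = Vτ t` identifies `-Gτ(Vτ, Vτ)` with `2 rm rm'`.
  have hwork : 2 * rm t * ((1 / (2 * Sm)) * wm (Vτ t)) = -(Gτ (Vτ t) (Vτ t)) := by
    rw [hweak t (Vτ t)]
    ring
  exact ((hODE t).fun_pow 2).congr_deriv (by rw [← hwork]; norm_num)

/-- Continuous mesh SAV dissipation: the modified mesh SAV energy `r_m²`
satisfies `d/dt r_m² = -G_τ(V_τ, V_τ) ≤ 0`. -/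
theorem continuous_mesh_sav_dissipation
    {V : Type*} [AddCommGroup V] [Module ℝ V]
    (Gτ : V → V → ℝ)
    (hGsymm : ∀ u v, Gτ u v = Gτ v u)
    (hGpsd : ∀ v, 0 ≤ Gτ v v)
    (wm : V →ₗ[ℝ] ℝ) (Sm : ℝ) (hSm : 0 < Sm)
    (rm : ℝ → ℝ) (Vτ : ℝ → V)
    (hweak : ∀ t φ, Gτ (Vτ t) φ = -(rm t / Sm) * wm φ)
    (hODE : ∀ t, HasDerivAt rm ((1 / (2 * Sm)) * wm (Vτ t)) t) :
    ∀ t, HasDerivAt (fun s => (rm s) ^ 2) (-(Gτ (Vτ t) (Vτ t))) t ∧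
      -(Gτ (Vτ t) (Vτ t)) ≤ 0 :=
  continuous_mesh_sav_dissipation_general Gτ hGpsd wm Sm rm Vτ hweak hODE
end

section
/- Let G, D : V × V → ℝ be symmetric bilinear forms on a real vector space V with G positive semidefinite and D positive semidefinite, let Δt > 0, w ∈ V', S > 0, g_1,…,g_K ∈ V', and suppose V⁺ ∈ V, r⁺, r ∈ ℝ with r⁺ ≠ 0, and λ_1,…,λ_K ∈ ℝ satisfy (i) G(V⁺, φ) + Δt·D(V⁺, φ) = -(r⁺/S)·⟨w, φ⟩ - Σ_i λ_i·⟨g_i, φ⟩ for all φ ∈ V, and (ii) (r⁺ - r)/Δt = (1/(2S))·⟨w, V⁺⟩ + Σ_i (λ_i/(2 r⁺))·⟨g_i, V⁺⟩. Then ((r⁺)² - r²)/Δt + ((r⁺ - r)²)/Δt + G(V⁺, V⁺) + Δt·D(V⁺, V⁺) = 0, and consequently ((r⁺)² - r²)/Δt ≤ -G(V⁺, V⁺) - Δt·D(V⁺, V⁺) ≤ 0. -/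
/-!
Test the weak equation (i) with `φ = V⁺` and multiply the auxiliary-variable update (ii) by
`2 r⁺`: the right-hand sides then agree, the factor `1 / (2 r⁺)` in (ii) being exactly what makes
the Lagrange-multiplier terms coincide, so `G(V⁺, V⁺) + Δt D(V⁺, V⁺) = -2 r⁺ (r⁺ - r) / Δt`.
The identity `2a(a - b) = (a² - b²) + (a - b)²` turns this into the energy identity, and dropping
the nonnegative terms gives the dissipation estimate.
-/

lemma two_mul_mul_div_sub_eq (a b t : ℝ) :
    2 * a * ((a - b) / t) = (a ^ 2 - b ^ 2) / t + (a - b) ^ 2 / t := by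
  rw [← add_div]
  ring

lemma two_mul_mul_sav_rhs {ι : Type*} (s : Finset ι) {a : ℝ} (ha : a ≠ 0) (S x : ℝ)
    (l y : ι → ℝ) :
    2 * a * (1 / (2 * S) * x + ∑ i ∈ s, l i / (2 * a) * y i) =
      a / S * x + ∑ i ∈ s, l i * y i := by
  rw [mul_add, Finset.mul_sum]
  congr 1
  · ring
  · refine Finset.sum_congr rfl fun i _ => ?_
    field_simp

theorem time_discrete_geometric_sav_dissipation_general
    {V : Type*} [AddCommGroup V] [Module ℝ V]
    (G D : V → V → ℝ)
    (hGpsd : ∀ v, 0 ≤ G v v)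
    (hDpsd : ∀ v, 0 ≤ D v v)
    (Δt : ℝ) (hΔt : 0 < Δt)
    (w : V →ₗ[ℝ] ℝ) (S : ℝ)
    {K : ℕ} (g : Fin K → V →ₗ[ℝ] ℝ)
    (Vp : V) (rp r : ℝ) (hrp : rp ≠ 0) (lam : Fin K → ℝ)
    (hweak : ∀ φ, G Vp φ + Δt * D Vp φ =
      -(rp / S) * w φ - ∑ i, lam i * g i φ)
    (hSAV : (rp - r) / Δt =
      (1 / (2 * S)) * w Vp + ∑ i, (lam i / (2 * rp)) * g i Vp) :
    (rp ^ 2 - r ^ 2) / Δt + (rp - r) ^ 2 / Δt + G Vp Vp + Δt * D Vp Vp = 0 ∧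
    (rp ^ 2 - r ^ 2) / Δt ≤ -(G Vp Vp) - Δt * D Vp Vp ∧
    -(G Vp Vp) - Δt * D Vp Vp ≤ 0 := by
  have hupdate : 2 * rp * ((rp - r) / Δt) = rp / S * w Vp + ∑ i, lam i * g i Vp := by
    rw [hSAV, two_mul_mul_sav_rhs _ hrp]
  have hcancel : G Vp Vp + Δt * D Vp Vp = -(2 * rp * ((rp - r) / Δt)) := by
    rw [hweak, hupdate]
    ring
  have hidentity :
      (rp ^ 2 - r ^ 2) / Δt + (rp - r) ^ 2 / Δt + G Vp Vp + Δt * D Vp Vp = 0 := by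
    rw [add_assoc, hcancel, two_mul_mul_div_sub_eq]
    ring
  refine ⟨hidentity, ?_, ?_⟩
  · linarith [div_nonneg (sq_nonneg (rp - r)) hΔt.le]
  · linarith [hGpsd Vp, mul_nonneg hΔt.le (hDpsd Vp)]

/-- Time-discrete geometric SAV dissipation for the zero-order stabilized
frozen-metric scheme, including the exact identity and the consequent
dissipation estimate. -/
theorem time_discrete_geometric_sav_dissipation
    {V : Type*} [AddCommGroup V] [Module ℝ V]
    (G D : V → V → ℝ)
    (hGsymm : ∀ u v, G u v = G v u) (hGpsd : ∀ v, 0 ≤ G v v)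
    (hDsymm : ∀ u v, D u v = D v u) (hDpsd : ∀ v, 0 ≤ D v v)
    (Δt : ℝ) (hΔt : 0 < Δt)
    (w : V →ₗ[ℝ] ℝ) (S : ℝ) (hS : 0 < S)
    {K : ℕ} (g : Fin K → V →ₗ[ℝ] ℝ)
    (Vp : V) (rp r : ℝ) (hrp : rp ≠ 0) (lam : Fin K → ℝ)
    (hweak : ∀ φ, G Vp φ + Δt * D Vp φ =
      -(rp / S) * w φ - ∑ i, lam i * g i φ)
    (hSAV : (rp - r) / Δt =
      (1 / (2 * S)) * w Vp + ∑ i, (lam i / (2 * rp)) * g i Vp) :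
    (rp ^ 2 - r ^ 2) / Δt + (rp - r) ^ 2 / Δt + G Vp Vp + Δt * D Vp Vp = 0 ∧
    (rp ^ 2 - r ^ 2) / Δt ≤ -(G Vp Vp) - Δt * D Vp Vp ∧
    -(G Vp Vp) - Δt * D Vp Vp ≤ 0 :=
  time_discrete_geometric_sav_dissipation_general G D hGpsd hDpsd Δt hΔt w S g Vp rp r hrp lam hweak
    hSAV
end

section
/- Let G, D : V × V → ℝ be symmetric positive semidefinite bilinear forms on a real vector space V, Δt > 0, w ∈ V', S > 0, and suppose V⁺ ∈ V and r⁺, r ∈ ℝ satisfy (i) G(V⁺, φ) + Δt·D(V⁺, φ) = -(r⁺/S)·⟨w, φ⟩ for all φ ∈ V, and (ii) (r⁺ - r)/Δt = (1/(2S))·⟨w, V⁺⟩. Then ((r⁺)² - r²)/Δt + ((r⁺ - r)²)/Δt + G(V⁺, V⁺) + Δt·D(V⁺, V⁺) = 0; in particular (r⁺)² ≤ r². -/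
/-!
Testing the weak equation with `φ = V⁺` and eliminating `⟨w, V⁺⟩` through the update of the
auxiliary variable gives `G(V⁺, V⁺) + Δt·D(V⁺, V⁺) = -2 r⁺ (r⁺ - r) / Δt`; the polarization
`2 a (a - b) = a² - b² + (a - b)²` turns this into the energy identity. Since every term other
than `((r⁺)² - r²)/Δt` is nonnegative, the modified energy cannot increase.
-/

/-- The energy identity of one SAV step, where `g` stands for `G(V⁺, V⁺) + Δt·D(V⁺, V⁺)` and
`ω` for `⟨w, V⁺⟩`. -/
theorem sav_step_energy_identity {Δt S rp r g ω : ℝ} (hΔt : Δt ≠ 0) (hS : S ≠ 0)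
    (hweak : g = -(rp / S) * ω) (hSAV : (rp - r) / Δt = 1 / (2 * S) * ω) :
    (rp ^ 2 - r ^ 2) / Δt + (rp - r) ^ 2 / Δt + g = 0 := by
  have hω : ω = 2 * S * (rp - r) / Δt := by
    field_simp at hSAV ⊢
    linarith
  rw [hweak, hω]
  field_simp
  ring

theorem sq_le_sq_of_energy_identity {Δt rp r g : ℝ} (hΔt : 0 < Δt) (hg : 0 ≤ g)
    (h : (rp ^ 2 - r ^ 2) / Δt + (rp - r) ^ 2 / Δt + g = 0) : rp ^ 2 ≤ r ^ 2 := by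
  have hjump : 0 ≤ (rp - r) ^ 2 / Δt := by positivity
  have hdecay : (rp ^ 2 - r ^ 2) / Δt ≤ 0 := by linarith
  rw [div_le_iff₀ hΔt, zero_mul] at hdecay
  linarith

theorem time_discrete_mesh_sav_dissipation_general
    {V : Type*} [AddCommGroup V] [Module ℝ V]
    (G D : V → V → ℝ)
    (hGpsd : ∀ v, 0 ≤ G v v)
    (hDpsd : ∀ v, 0 ≤ D v v)
    (Δt : ℝ) (hΔt : 0 < Δt)
    (w : V →ₗ[ℝ] ℝ) (S : ℝ) (hS : 0 < S)
    (Vp : V) (rp r : ℝ)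
    (hweak : ∀ φ, G Vp φ + Δt * D Vp φ = -(rp / S) * w φ)
    (hSAV : (rp - r) / Δt = (1 / (2 * S)) * w Vp) :
    (rp ^ 2 - r ^ 2) / Δt + (rp - r) ^ 2 / Δt + G Vp Vp + Δt * D Vp Vp = 0 ∧
    rp ^ 2 ≤ r ^ 2 := by
  have hid := sav_step_energy_identity hΔt.ne' hS.ne' (hweak Vp) hSAV
  have hdiss : 0 ≤ G Vp Vp + Δt * D Vp Vp :=
    add_nonneg (hGpsd Vp) (mul_nonneg hΔt.le (hDpsd Vp))
  exact ⟨by rwa [← add_assoc] at hid, sq_le_sq_of_energy_identity hΔt hdiss hid⟩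

/-- Time-discrete mesh SAV dissipation estimate for the stabilized tangential
subsystem: the exact identity holds and `(r⁺)² ≤ r²`. -/
theorem time_discrete_mesh_sav_dissipation
    {V : Type*} [AddCommGroup V] [Module ℝ V]
    (G D : V → V → ℝ)
    (hGsymm : ∀ u v, G u v = G v u) (hGpsd : ∀ v, 0 ≤ G v v)
    (hDsymm : ∀ u v, D u v = D v u) (hDpsd : ∀ v, 0 ≤ D v v)
    (Δt : ℝ) (hΔt : 0 < Δt)
    (w : V →ₗ[ℝ] ℝ) (S : ℝ) (hS : 0 < S)
    (Vp : V) (rp r : ℝ)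
    (hweak : ∀ φ, G Vp φ + Δt * D Vp φ = -(rp / S) * w φ)
    (hSAV : (rp - r) / Δt = (1 / (2 * S)) * w Vp) :
    (rp ^ 2 - r ^ 2) / Δt + (rp - r) ^ 2 / Δt + G Vp Vp + Δt * D Vp Vp = 0 ∧
    rp ^ 2 ≤ r ^ 2 :=
  time_discrete_mesh_sav_dissipation_general G D hGpsd hDpsd Δt hΔt w S hS Vp rp r hweak hSAV
end

section
/- Let M, A, D ∈ ℝ^{N×N} be symmetric matrices with M = A + Δt·D, A positive semidefinite, D positive semidefinite, Δt > 0. Let F, G_1,…,G_K ∈ ℝ^N, S > 0, and suppose V ∈ ℝ^N, r⁺, r ∈ ℝ with r⁺ ≠ 0, and λ_1,…,λ_K ∈ ℝ satisfy M·V = -(r⁺/S)·F - Σ_i λ_i·G_i and (r⁺ - r)/Δt = (1/(2S))·Fᵀ V + Σ_i (λ_i/(2 r⁺))·G_iᵀ V. Then ((r⁺)² - r²)/Δt ≤ -Vᵀ A V - Δt·Vᵀ D V ≤ 0. -/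
/-!
Multiplying the SAV update by `2 r⁺` and pairing the velocity equation with `V` turn the right-hand
side of the SAV update into `-Vᵀ M V`, so `2 r⁺ (r⁺ - r) / Δt = -Vᵀ A V - Δt Vᵀ D V`. Since
`(r⁺)² - r² = 2 r⁺ (r⁺ - r) - (r⁺ - r)²`, dropping the square gives the energy inequality, and
positive semidefiniteness of `A` and `D` gives its sign.
-/

open Matrix

namespace Matrix

variable {n ι R : Type*} [Fintype n] [Fintype ι] [CommRing R]

theorem dotProduct_add_smul_mulVec (A D : Matrix n n R) (c : R) (v : n → R) :
    v ⬝ᵥ (A + c • D) *ᵥ v = v ⬝ᵥ A *ᵥ v + c * (v ⬝ᵥ D *ᵥ v) := by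
  rw [add_mulVec, smul_mulVec, dotProduct_add, dotProduct_smul, smul_eq_mul]

theorem dotProduct_mulVec_eq_of_mulVec_eq_neg_smul_sub_sum {M : Matrix n n R}
    {v f : n → R} {G : ι → n → R} {c : R} {lam : ι → R}
    (h : M *ᵥ v = -(c • f) - ∑ i, lam i • G i) :
    v ⬝ᵥ M *ᵥ v = -(c * (f ⬝ᵥ v)) - ∑ i, lam i * (G i ⬝ᵥ v) := by
  simp only [dotProduct_comm v, h, sub_dotProduct, neg_dotProduct, sum_dotProduct, smul_dotProduct,
    smul_eq_mul]

end Matrix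

theorem sq_sub_sq_div_le_of_two_mul_mul_sub_div_eq {𝕜 : Type*} [Field 𝕜] [LinearOrder 𝕜]
    [IsStrictOrderedRing 𝕜] {p q τ E : 𝕜} (hτ : 0 < τ) (h : 2 * p * ((p - q) / τ) = E) :
    (p ^ 2 - q ^ 2) / τ ≤ E := by
  rw [← h, ← mul_div_assoc]
  gcongr
  nlinarith [sq_nonneg (p - q)]

theorem fully_discrete_geometric_sav_dissipation_general
    {N K : ℕ} (M A D : Matrix (Fin N) (Fin N) ℝ)
    (hA : A.PosSemidef) (hD : D.PosSemidef)
    (Δt : ℝ) (hΔt : 0 < Δt) (hM : M = A + Δt • D)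
    (F : Fin N → ℝ) (G : Fin K → Fin N → ℝ)
    (S : ℝ)
    (V : Fin N → ℝ) (rp r : ℝ) (hrp : rp ≠ 0) (lam : Fin K → ℝ)
    (hvel : M.mulVec V = -((rp / S) • F) - ∑ i, lam i • G i)
    (hSAV : (rp - r) / Δt =
      (1 / (2 * S)) * (F ⬝ᵥ V) + ∑ i, (lam i / (2 * rp)) * (G i ⬝ᵥ V)) :
    (rp ^ 2 - r ^ 2) / Δt ≤ -(V ⬝ᵥ A.mulVec V) - Δt * (V ⬝ᵥ D.mulVec V) ∧
    -(V ⬝ᵥ A.mulVec V) - Δt * (V ⬝ᵥ D.mulVec V) ≤ 0 := by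
  have hincr : 2 * rp * ((rp - r) / Δt) = -(V ⬝ᵥ M *ᵥ V) := by
    rw [hSAV, dotProduct_mulVec_eq_of_mulVec_eq_neg_smul_sub_sum hvel, mul_add, Finset.mul_sum]
    field_simp
    ring
  rw [hM, dotProduct_add_smul_mulVec, neg_add'] at hincr
  have hAV : 0 ≤ V ⬝ᵥ A *ᵥ V := by simpa using hA.dotProduct_mulVec_nonneg V
  have hDV : 0 ≤ V ⬝ᵥ D *ᵥ V := by simpa using hD.dotProduct_mulVec_nonneg V
  exact ⟨sq_sub_sq_div_le_of_two_mul_mul_sub_div_eq hΔt hincr, by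
    linarith [mul_nonneg hΔt.le hDV]⟩

/-- Fully discrete geometric SAV dissipation in matrix form: with
`M = A + Δt·D`, `A, D` symmetric positive semidefinite, the modified geometric
SAV energy decays. -/
theorem fully_discrete_geometric_sav_dissipation
    {N K : ℕ} (M A D : Matrix (Fin N) (Fin N) ℝ)
    (hA : A.PosSemidef) (hD : D.PosSemidef)
    (Δt : ℝ) (hΔt : 0 < Δt) (hM : M = A + Δt • D)
    (F : Fin N → ℝ) (G : Fin K → Fin N → ℝ)
    (S : ℝ) (hS : 0 < S)
    (V : Fin N → ℝ) (rp r : ℝ) (hrp : rp ≠ 0) (lam : Fin K → ℝ)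
    (hvel : M.mulVec V = -((rp / S) • F) - ∑ i, lam i • G i)
    (hSAV : (rp - r) / Δt =
      (1 / (2 * S)) * (F ⬝ᵥ V) + ∑ i, (lam i / (2 * rp)) * (G i ⬝ᵥ V)) :
    (rp ^ 2 - r ^ 2) / Δt ≤ -(V ⬝ᵥ A.mulVec V) - Δt * (V ⬝ᵥ D.mulVec V) ∧
    -(V ⬝ᵥ A.mulVec V) - Δt * (V ⬝ᵥ D.mulVec V) ≤ 0 :=
  fully_discrete_geometric_sav_dissipation_general M A D hA hD Δt hΔt hM F G S V rp r hrp lam hvel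
    hSAV
end

section
/- Let M_τ ∈ ℝ^{N×N} be symmetric positive definite, F ∈ ℝ^N, S > 0, Δt > 0, and r ∈ ℝ. Let V_m := -M_τ^{-1} F be the tangential response vector. Then the scalar r⁺ defined by r⁺ = r / (1 - (Δt/(2S²))·Fᵀ V_m) is well-defined (the denominator is ≥ 1, since Fᵀ V_m = -Fᵀ M_τ^{-1} F ≤ 0), and the pair (V_τ, r⁺) with V_τ := (r⁺/S)·V_m satisfies M_τ·V_τ = -(r⁺/S)·F and (r⁺ - r)/Δt = (1/(2S))·Fᵀ V_τ. -/
open Matrix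

/-- Explicit closed-form update of the mesh auxiliary variable in the block
reduction: the denominator is at least one, and the reconstructed tangential
velocity together with `r⁺` solves the fully discrete tangential subsystem. -/
theorem mesh_sav_block_reduction_update
    {N : ℕ} (Mτ : Matrix (Fin N) (Fin N) ℝ) (hMτ : Mτ.PosDef)
    (F : Fin N → ℝ) (S : ℝ) (hS : 0 < S) (Δt : ℝ) (hΔt : 0 < Δt) (r : ℝ) :
    let Vm : Fin N → ℝ := -(Mτ⁻¹.mulVec F)
    let d : ℝ := 1 - (Δt / (2 * S ^ 2)) * (F ⬝ᵥ Vm)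
    let rp : ℝ := r / d
    let Vτ : Fin N → ℝ := (rp / S) • Vm
    1 ≤ d ∧
    F ⬝ᵥ Vm ≤ 0 ∧
    Mτ.mulVec Vτ = -((rp / S) • F) ∧
    (rp - r) / Δt = (1 / (2 * S)) * (F ⬝ᵥ Vτ) := by
  intro Vm d rp Vτ
  have hinv : (Mτ⁻¹).PosDef := hMτ.inv
  have hquad : 0 ≤ F ⬝ᵥ Mτ⁻¹.mulVec F := by
    by_cases hF : F = 0
    · simp [hF]
    · exact le_of_lt (by simpa using hinv.dotProduct_mulVec_pos hF)
  have hFVm : F ⬝ᵥ Vm ≤ 0 := by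
    simpa [Vm, dotProduct_neg] using neg_nonpos_of_nonneg hquad
  have hd : 1 ≤ d := by
    have hcoef : 0 ≤ Δt / (2 * S ^ 2) := by positivity
    have : (Δt / (2 * S ^ 2)) * (F ⬝ᵥ Vm) ≤ 0 :=
      mul_nonpos_of_nonneg_of_nonpos hcoef hFVm
    simp only [d]; linarith
  have hd0 : d ≠ 0 := by linarith
  have hMM : Mτ * Mτ⁻¹ = 1 := mul_nonsing_inv Mτ (isUnit_iff_ne_zero.mpr hMτ.det_pos.ne')
  have hmul : Mτ.mulVec Vτ = -((rp / S) • F) := by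
    have : Mτ.mulVec (Mτ⁻¹.mulVec F) = F := by
      rw [mulVec_mulVec, hMM, one_mulVec]
    simp [Vτ, Vm, mulVec_smul, mulVec_neg, this, smul_neg]
  refine ⟨hd, hFVm, hmul, ?_⟩
  have hrpd : rp * d = r := div_mul_cancel₀ r hd0
  have : rp - r = rp * ((Δt / (2 * S ^ 2)) * (F ⬝ᵥ Vm)) := by
    have : rp - rp * d = rp * (1 - d) := by ring
    simp only [d] at hrpd ⊢
    nlinarith [hrpd]
  have hdot : F ⬝ᵥ Vτ = (rp / S) * (F ⬝ᵥ Vm) := by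
    simp [Vτ, dotProduct_smul, smul_eq_mul]
  rw [this, hdot]
  field_simp
end

section
/- Conversely to the block reduction: let M ∈ ℝ^{N×N} be symmetric positive definite and suppose (V, r⁺, λ_1,…,λ_K) with r⁺ ≠ 0 satisfies M·V = -(r⁺/S)·F - Σ_i λ_i·G_i, the SAV update (r⁺ - r)/Δt = (1/(2S))·Fᵀ V + Σ_i (λ_i/(2r⁺))·G_iᵀ V, and the updated-node constraints C_i = 0. Then Ξ := (r⁺, λ_1,…,λ_K) solves the reduced system R(Ξ) = 0, and V = V_ν(Ξ) where V_ν(Ξ) := (r⁺/S)·(-M^{-1}F) + Σ_i λ_i·(-M^{-1}G_i). -/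
/-!
A positive definite `M` is invertible, so the momentum equation forces `V = M⁻¹ (rhs)`, which
expands linearly to the synthesis formula `V_ν(Ξ)`; with `V = V_ν(Ξ)` substituted, the SAV update
and the constraints are the remaining components of `R(Ξ) = 0`.
-/

open Matrix

namespace Matrix

variable {m n ι R : Type*} [Fintype n] [CommRing R] [Fintype ι]

theorem mulVec_neg_smul_sub_sum (A : Matrix m n R) (a : R) (F : n → R) (c : ι → R)
    (G : ι → n → R) :
    A *ᵥ (-(a • F) - ∑ i, c i • G i) = a • (-(A *ᵥ F)) + ∑ i, c i • (-(A *ᵥ G i)) := by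
  rw [mulVec_sub, mulVec_neg, mulVec_smul, mulVec_sum, sub_eq_add_neg, ← Finset.sum_neg_distrib]
  simp only [mulVec_smul, smul_neg]

theorem eq_synthesis_of_mulVec_eq [DecidableEq n] {M : Matrix n n R} (hM : IsUnit M)
    {V F : n → R} {a : R} {c : ι → R} {G : ι → n → R} (hV : M *ᵥ V = -(a • F) - ∑ i, c i • G i) :
    V = a • (-(M⁻¹ *ᵥ F)) + ∑ i, c i • (-(M⁻¹ *ᵥ G i)) := by
  have := hM.invertible
  rw [← mulVec_neg_smul_sub_sum, inv_mulVec_eq_vec hV.symm]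

end Matrix

theorem block_reduction_converse_general
    {N K : ℕ} (M : Matrix (Fin N) (Fin N) ℝ) (hM : M.PosDef)
    (F : Fin N → ℝ) (G : Fin K → Fin N → ℝ)
    (S : ℝ) (Δt : ℝ) (r : ℝ)
    (x ν τ : Fin N → ℝ × ℝ) (Vτ : Fin N → ℝ)
    (C : Fin K → ((Fin N → ℝ × ℝ)) → ℝ)
    (V : Fin N → ℝ) (rp : ℝ) (lam : Fin K → ℝ)
    (hvel : M.mulVec V = -((rp / S) • F) - ∑ i, lam i • G i)
    (hSAV : (rp - r) / Δt = (1 / (2 * S)) * (F ⬝ᵥ V)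
        + ∑ i, (lam i / (2 * rp)) * (G i ⬝ᵥ V))
    (hcon : ∀ i, C i (fun j => x j + Δt • (V j • ν j + Vτ j • τ j)) = 0) :
    let Vν : Fin N → ℝ :=
      (rp / S) • (-(M⁻¹.mulVec F)) + ∑ i, lam i • (-(M⁻¹.mulVec (G i)))
    V = Vν ∧
    ((rp - r) / Δt - (1 / (2 * S)) * (F ⬝ᵥ Vν)
        - ∑ i, (lam i / (2 * rp)) * (G i ⬝ᵥ Vν) = 0) ∧
    (∀ i, C i (fun j => x j + Δt • (Vν j • ν j + Vτ j • τ j)) = 0) := by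
  intro Vν
  have hV : V = Vν := eq_synthesis_of_mulVec_eq hM.isUnit hvel
  rw [← hV]
  refine ⟨rfl, ?_, hcon⟩
  rw [hSAV]
  ring

/-- Converse direction of the algebraic block reduction: any solution of the
fully discrete constrained system with nonzero geometric auxiliary variable
yields a solution of the reduced `(K+1)`-dimensional system, with the velocity
recovered by the linear synthesis formula. -/
theorem block_reduction_converse
    {N K : ℕ} (M : Matrix (Fin N) (Fin N) ℝ) (hM : M.PosDef)
    (F : Fin N → ℝ) (G : Fin K → Fin N → ℝ)
    (S : ℝ) (hS : 0 < S) (Δt : ℝ) (hΔt : 0 < Δt) (r : ℝ)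
    (x ν τ : Fin N → ℝ × ℝ) (Vτ : Fin N → ℝ)
    (C : Fin K → ((Fin N → ℝ × ℝ)) → ℝ)
    (V : Fin N → ℝ) (rp : ℝ) (lam : Fin K → ℝ) (hrp : rp ≠ 0)
    (hvel : M.mulVec V = -((rp / S) • F) - ∑ i, lam i • G i)
    (hSAV : (rp - r) / Δt = (1 / (2 * S)) * (F ⬝ᵥ V)
        + ∑ i, (lam i / (2 * rp)) * (G i ⬝ᵥ V))
    (hcon : ∀ i, C i (fun j => x j + Δt • (V j • ν j + Vτ j • τ j)) = 0) :
    let Vν : Fin N → ℝ :=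
      (rp / S) • (-(M⁻¹.mulVec F)) + ∑ i, lam i • (-(M⁻¹.mulVec (G i)))
    V = Vν ∧
    ((rp - r) / Δt - (1 / (2 * S)) * (F ⬝ᵥ Vν)
        - ∑ i, (lam i / (2 * rp)) * (G i ⬝ᵥ Vν) = 0) ∧
    (∀ i, C i (fun j => x j + Δt • (Vν j • ν j + Vτ j • τ j)) = 0) :=
  block_reduction_converse_general M hM F G S Δt r x ν τ Vτ C V rp lam hvel hSAV hcon
end

section
/- Let M, A, D ∈ ℝ^{N×N} be symmetric with M = A + Δt·D, A positive semidefinite, D positive semidefinite, Δt > 0. Suppose V ∈ ℝ^N, r⁺, r ∈ ℝ satisfy M·V = -(r⁺/S)·F and (r⁺ - r)/Δt = (1/(2S))·Fᵀ V for some F ∈ ℝ^N, S > 0. Then ((r⁺)² - r²)/Δt + ((r⁺ - r)²)/Δt + Vᵀ A V + Δt·Vᵀ D V = 0, and in particular |r⁺| ≤ |r|. -/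
open Matrix

/-!
Testing the velocity equation `M V = -(r⁺/S) F` against `V` and inserting the SAV update gives
`Vᵀ M V = -2 r⁺ (r⁺ - r) / Δt`, and `2 a (a - b) = (a² - b²) + (a - b)²` splits the right-hand side
into the energy change and the temporal variation. Since `Vᵀ M V = Vᵀ A V + Δt Vᵀ D V ≥ 0`, the
energy change `(r⁺)² - r²` is nonpositive.
-/

section QuadraticForm

variable {n : Type*} [Fintype n]

theorem Matrix.dotProduct_add_smul_mulVec_s12 {R : Type*} [CommSemiring R]
    (A D : Matrix n n R) (t : R) (V : n → R) :
    V ⬝ᵥ (A + t • D) *ᵥ V = V ⬝ᵥ A *ᵥ V + t * (V ⬝ᵥ D *ᵥ V) := by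
  rw [add_mulVec, smul_mulVec, dotProduct_add, dotProduct_smul, smul_eq_mul]

theorem Matrix.dotProduct_mulVec_eq_of_mulVec_eq_neg_smul {R : Type*} [CommRing R]
    {M : Matrix n n R} {V F : n → R} {c : R}
    (h : M *ᵥ V = -(c • F)) : V ⬝ᵥ M *ᵥ V = -c * (F ⬝ᵥ V) := by
  rw [h, dotProduct_neg, dotProduct_smul, smul_eq_mul, dotProduct_comm, neg_mul]

theorem sav_dotProduct_mulVec_eq {M : Matrix n n ℝ} {F V : n → ℝ}
    {S Δt rp r : ℝ} (hvel : M *ᵥ V = -((rp / S) • F))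
    (hSAV : (rp - r) / Δt = (1 / (2 * S)) * (F ⬝ᵥ V)) :
    V ⬝ᵥ M *ᵥ V = -(2 * rp * (rp - r) / Δt) := by
  rw [dotProduct_mulVec_eq_of_mulVec_eq_neg_smul hvel, mul_div_assoc, hSAV]
  ring

end QuadraticForm

theorem abs_le_abs_of_sav_energy_eq_zero {Δt rp r Q : ℝ} (hΔt : 0 < Δt) (hQ : 0 ≤ Q)
    (h : (rp ^ 2 - r ^ 2) / Δt + (rp - r) ^ 2 / Δt + Q = 0) : |rp| ≤ |r| := by
  have hvar : 0 ≤ (rp - r) ^ 2 / Δt := by positivity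
  have hchange : (rp ^ 2 - r ^ 2) / Δt ≤ 0 := by linarith
  rw [← sq_le_sq, ← sub_nonpos]
  by_contra! hpos
  exact hchange.not_gt (div_pos hpos hΔt)

theorem fully_discrete_mesh_sav_identity_general
    {N : ℕ} (M A D : Matrix (Fin N) (Fin N) ℝ)
    (hA : A.PosSemidef) (hD : D.PosSemidef)
    (Δt : ℝ) (hΔt : 0 < Δt) (hM : M = A + Δt • D)
    (F : Fin N → ℝ) (S : ℝ)
    (V : Fin N → ℝ) (rp r : ℝ)
    (hvel : M.mulVec V = -((rp / S) • F))
    (hSAV : (rp - r) / Δt = (1 / (2 * S)) * (F ⬝ᵥ V)) :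
    (rp ^ 2 - r ^ 2) / Δt + (rp - r) ^ 2 / Δt
      + V ⬝ᵥ A.mulVec V + Δt * (V ⬝ᵥ D.mulVec V) = 0 ∧
    |rp| ≤ |r| := by
  have hquad := sav_dotProduct_mulVec_eq hvel hSAV
  rw [hM, dotProduct_add_smul_mulVec_s12] at hquad
  have hidentity : (rp ^ 2 - r ^ 2) / Δt + (rp - r) ^ 2 / Δt
      + V ⬝ᵥ A.mulVec V + Δt * (V ⬝ᵥ D.mulVec V) = 0 := by
    linear_combination hquad
  have hAV : 0 ≤ V ⬝ᵥ A *ᵥ V := by simpa using hA.dotProduct_mulVec_nonneg V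
  have hDV : 0 ≤ V ⬝ᵥ D *ᵥ V := by simpa using hD.dotProduct_mulVec_nonneg V
  refine ⟨hidentity, abs_le_abs_of_sav_energy_eq_zero hΔt
    (add_nonneg hAV (mul_nonneg hΔt.le hDV)) ?_⟩
  linear_combination hidentity

/-- Fully discrete mesh SAV dissipation identity in matrix form, including the
exact identity before dropping the nonnegative temporal variation term;
it implies `|r⁺| ≤ |r|`. -/
theorem fully_discrete_mesh_sav_identity
    {N : ℕ} (M A D : Matrix (Fin N) (Fin N) ℝ)
    (hA : A.PosSemidef) (hD : D.PosSemidef)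
    (Δt : ℝ) (hΔt : 0 < Δt) (hM : M = A + Δt • D)
    (F : Fin N → ℝ) (S : ℝ) (hS : 0 < S)
    (V : Fin N → ℝ) (rp r : ℝ)
    (hvel : M.mulVec V = -((rp / S) • F))
    (hSAV : (rp - r) / Δt = (1 / (2 * S)) * (F ⬝ᵥ V)) :
    (rp ^ 2 - r ^ 2) / Δt + (rp - r) ^ 2 / Δt
      + V ⬝ᵥ A.mulVec V + Δt * (V ⬝ᵥ D.mulVec V) = 0 ∧
    |rp| ≤ |r| :=
  fully_discrete_mesh_sav_identity_general M A D hA hD Δt hΔt hM F S V rp r hvel hSAV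
end
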